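/- Let m ∈ (1,2) and let η be a real number with |η| ≤ 1/2. Then (1+η)^m ≤ 1 + m·η + (m(m-1)/2)·3^{2-m}·η². -/

import Mathlib

/-!
On `[-1/2, ∞)` the second derivative `m (m - 1) (1 + t) ^ (m - 2)` of `t ↦ (1 + t) ^ m` is at most
`K = m (m - 1) 2 ^ (2 - m)`, so `(1 + t) ^ m - K t ^ 2 / 2` is concave there and lies below its
tangent line `1 + m t` at `0`. Finally `2 ^ (2 - m) ≤ 3 ^ (2 - m)`.
-/

open Real Set

theorem ConcaveOn.le_add_mul_sub_of_hasDerivAt {S : Set ℝ} {f : ℝ → ℝ} {f' x y : ℝ}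
    (hf : ConcaveOn ℝ S f) (hx : x ∈ S) (hy : y ∈ S) (hf' : HasDerivAt f f' x) :
    f y ≤ f x + f' * (y - x) := by
  rcases lt_trichotomy x y with hxy | rfl | hyx
  · have h := hf.slope_le_of_hasDerivAt hx hy hxy hf'
    rw [slope_def_field, div_le_iff₀ (sub_pos.2 hxy)] at h
    linarith
  · simp
  · have h := hf.le_slope_of_hasDerivAt hy hx hyx hf'
    rw [slope_def_field, le_div_iff₀ (sub_pos.2 hyx)] at h
    linarith

theorem le_add_mul_sub_add_of_hasDerivAt2_le {D : Set ℝ} (hD : Convex ℝ D) {f f' f'' : ℝ → ℝ}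
    {K x y : ℝ} (hf : ContinuousOn f D) (hf' : ∀ t ∈ interior D, HasDerivAt f (f' t) t)
    (hf'' : ∀ t ∈ interior D, HasDerivAt f' (f'' t) t) (hK : ∀ t ∈ interior D, f'' t ≤ K)
    (hx : x ∈ interior D) (hy : y ∈ D) :
    f y ≤ f x + f' x * (y - x) + K / 2 * (y - x) ^ 2 := by
  have hq : ∀ t, HasDerivAt (fun t => K / 2 * (t - x) ^ 2) (K * (t - x)) t := fun t =>
    (((hasDerivAt_id t).sub_const x).fun_pow 2).const_mul (K / 2) |>.congr_deriv (by simp; ring)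
  have hq' : ∀ t, HasDerivAt (fun t => K * (t - x)) K t := fun t =>
    ((hasDerivAt_id t).sub_const x).const_mul K |>.congr_deriv (mul_one K)
  have hconc : ConcaveOn ℝ D (fun t => f t - K / 2 * (t - x) ^ 2) :=
    concaveOn_of_hasDerivWithinAt2_nonpos hD (hf.sub (by fun_prop))
      (fun t ht => ((hf' t ht).sub (hq t)).hasDerivWithinAt)
      (fun t ht => ((hf'' t ht).sub (hq' t)).hasDerivWithinAt)
      (fun t ht => sub_nonpos.2 (hK t ht))
  have htangent :=
    hconc.le_add_mul_sub_of_hasDerivAt (interior_subset hx) hy ((hf' x hx).sub (hq x))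
  simp only [sub_self, mul_zero, sub_zero] at htangent
  linarith

theorem hasDerivAt_one_add_rpow {p t : ℝ} (ht : -1 < t) :
    HasDerivAt (fun t => (1 + t) ^ p) (p * (1 + t) ^ (p - 1)) t := by
  simpa using ((hasDerivAt_id t).const_add 1).rpow_const (p := p) (Or.inl (by simp; linarith))

theorem one_add_rpow_le_two_rpow_neg {q t : ℝ} (hq : q ≤ 0) (ht : -(1 / 2) ≤ t) :
    (1 + t) ^ q ≤ (2 : ℝ) ^ (-q) :=
  calc (1 + t) ^ q ≤ (1 / 2 : ℝ) ^ q := rpow_le_rpow_of_nonpos (by norm_num) (by linarith) hq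
    _ = (2 : ℝ) ^ (-q) := by rw [one_div, inv_rpow zero_le_two, rpow_neg zero_le_two]

theorem one_add_rpow_le_of_neg_half_le {m η : ℝ} (hm1 : 1 ≤ m) (hm2 : m ≤ 2)
    (hη : -(1 / 2) ≤ η) :
    (1 + η) ^ m ≤ 1 + m * η + (m * (m - 1) / 2) * (2 : ℝ) ^ (2 - m) * η ^ 2 := by
  have hint : interior (Ici (-(1 / 2) : ℝ)) = Ioi (-(1 / 2)) := interior_Ici
  have hgt : ∀ t ∈ interior (Ici (-(1 / 2) : ℝ)), -1 < t := fun t ht => by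
    rw [hint, mem_Ioi] at ht; linarith
  have hf'' : ∀ t ∈ interior (Ici (-(1 / 2) : ℝ)),
      m * ((m - 1) * (1 + t) ^ (m - 1 - 1)) ≤ m * (m - 1) * (2 : ℝ) ^ (2 - m) := fun t ht => by
    have hpow : (1 + t) ^ (m - 1 - 1) ≤ (2 : ℝ) ^ (2 - m) := by
      convert one_add_rpow_le_two_rpow_neg (q := m - 1 - 1) (by linarith)
        (interior_subset (s := Ici _) ht) using 2
      ring
    rw [← mul_assoc]
    exact mul_le_mul_of_nonneg_left hpow (mul_nonneg (by linarith) (by linarith))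
  have key := le_add_mul_sub_add_of_hasDerivAt2_le (convex_Ici _) (x := 0) (y := η)
    (fun t ht => (hasDerivAt_one_add_rpow (p := m) (by simp at ht; linarith)).continuousAt
      |>.continuousWithinAt)
    (fun t ht => hasDerivAt_one_add_rpow (hgt t ht))
    (fun t ht => (hasDerivAt_one_add_rpow (hgt t ht)).const_mul m) hf''
    (by rw [hint]; norm_num) hη
  simp only [add_zero, one_rpow, mul_one, sub_zero] at key
  linarith

theorem pointwise_upper_bound_rpow (m η : ℝ) (hm1 : 1 < m) (hm2 : m < 2)
    (hη : |η| ≤ 1 / 2) :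
    (1 + η) ^ m ≤ 1 + m * η + (m * (m - 1) / 2) * (3:ℝ) ^ (2 - m) * η ^ 2 := by
  calc (1 + η) ^ m ≤ 1 + m * η + (m * (m - 1) / 2) * (2 : ℝ) ^ (2 - m) * η ^ 2 :=
        one_add_rpow_le_of_neg_half_le hm1.le hm2.le (abs_le.mp hη).1
    _ ≤ 1 + m * η + (m * (m - 1) / 2) * (3 : ℝ) ^ (2 - m) * η ^ 2 := by
        gcongr
        norm_num
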